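/- arXiv:1911.08830 — 4 statements merged into one kernel-verified Lean document; each statement's English description precedes it below -/
import Mathlib

section
/- Let p ≥ 1 and T ≥ 2 be integers, let a > 1, and let q : ([0,1]^p)^T → ℝ be a measurable probability density with respect to Lebesgue measure on ([0,1]^p)^T satisfying a⁻¹ ≤ q(w) ≤ a for all w. Then for every square-integrable g : [0,1]^p → ℝ, (1/(2a))·‖g‖₂² ≤ ∫_{([0,1]^p)^T} V_T(g)(w)·q(w) dw ≤ a·‖g‖₂². -/
open MeasureTheory

/-- The unit cube [0,1]^p. -/
def unitBox (p : ℕ) : Set (Fin p → ℝ) := Set.univ.pi fun _ => Set.Icc (0:ℝ) 1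

/-- The T-fold product ([0,1]^p)^T of unit cubes. -/
def unitBoxT (p T : ℕ) : Set (Fin T → (Fin p → ℝ)) := Set.univ.pi fun _ => unitBox p

/-- The centered sample variance V_T(g)(w) = (1/T)·Σ_t (g(w_t) − (1/T)Σ_s g(w_s))². -/
noncomputable def sampleVar (p T : ℕ) (g : (Fin p → ℝ) → ℝ)
    (w : Fin T → (Fin p → ℝ)) : ℝ :=
  (1 / (T : ℝ)) * ∑ t, (g (w t) - (1 / (T : ℝ)) * ∑ s, g (w s)) ^ 2

/-!
Under the uniform measure on `([0,1]^p)^T` the coordinates `w_t` are i.i.d., so the classical bias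
computation for the sample variance gives `∫ V_T(g) = (1 - 1/T)·‖g‖₂²`. Since `V_T(g) ≥ 0` and
`a⁻¹ ≤ q ≤ a`, weighting by `q` changes this by a factor in `[a⁻¹, a]`, and `1/2 ≤ 1 - 1/T ≤ 1`
for `T ≥ 2`.
-/

open ProbabilityTheory

noncomputable def sampleVariance {T : ℕ} (x : Fin T → ℝ) : ℝ :=
  (1 / (T : ℝ)) * ∑ t, (x t - (1 / (T : ℝ)) * ∑ s, x s) ^ 2

theorem sampleVariance_eq_sum_sq_sub_sum_mul {T : ℕ} (hT : T ≠ 0) (x : Fin T → ℝ) :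
    sampleVariance x = (1 / (T : ℝ)) * ∑ t, x t ^ 2 - (1 / (T : ℝ)) ^ 2 * ∑ s, ∑ t, x s * x t := by
  have hT' : (T : ℝ) ≠ 0 := Nat.cast_ne_zero.2 hT
  simp only [sampleVariance, sub_sq, Finset.sum_add_distrib, Finset.sum_sub_distrib,
    ← Finset.mul_sum, ← Finset.sum_mul, Finset.sum_const, Finset.card_univ, Fintype.card_fin,
    nsmul_eq_mul]
  field_simp
  ring

theorem sum_sum_ite_eq_const {T : ℕ} (x y : ℝ) :
    ∑ s : Fin T, ∑ t : Fin T, (if s = t then x else y) = T * (x + (T - 1) * y) := by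
  have h (s t : Fin T) : (if s = t then x else y) = y + if s = t then x - y else 0 := by
    split_ifs <;> ring
  simp only [h, Finset.sum_add_distrib, Finset.sum_ite_eq, Finset.mem_univ, if_true,
    Finset.sum_const, Finset.card_univ, Fintype.card_fin, nsmul_eq_mul]
  ring

section SampleVariance

variable {Ω : Type*} [MeasurableSpace Ω] {P : Measure Ω} {T : ℕ} {X : Fin T → Ω → ℝ}
  {m₁ m₂ : ℝ}

theorem integrable_and_integral_mul_of_pairwise_indepFun (hind : Pairwise fun s t => X s ⟂ᵢ[P] X t)
    (hX₁ : ∀ t, Integrable (X t) P) (hX₂ : ∀ t, Integrable (fun ω => X t ω ^ 2) P)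
    (hm₁ : ∀ t, ∫ ω, X t ω ∂P = m₁) (hm₂ : ∀ t, ∫ ω, X t ω ^ 2 ∂P = m₂) (s t : Fin T) :
    Integrable (fun ω => X s ω * X t ω) P ∧
      ∫ ω, X s ω * X t ω ∂P = if s = t then m₂ else m₁ ^ 2 := by
  rcases eq_or_ne s t with rfl | hst
  · simpa only [← sq, if_pos] using ⟨hX₂ s, hm₂ s⟩
  · refine ⟨(hind hst).integrable_mul (hX₁ s) (hX₁ t), ?_⟩
    rw [if_neg hst, (hind hst).integral_fun_mul_eq_mul_integral (hX₁ s).1 (hX₁ t).1, hm₁, hm₁, sq]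

theorem integrable_and_integral_sampleVariance (hT : T ≠ 0)
    (hind : Pairwise fun s t => X s ⟂ᵢ[P] X t)
    (hX₁ : ∀ t, Integrable (X t) P) (hX₂ : ∀ t, Integrable (fun ω => X t ω ^ 2) P)
    (hm₁ : ∀ t, ∫ ω, X t ω ∂P = m₁) (hm₂ : ∀ t, ∫ ω, X t ω ^ 2 ∂P = m₂) :
    Integrable (fun ω => sampleVariance fun t => X t ω) P ∧
      ∫ ω, sampleVariance (fun t => X t ω) ∂P = (1 - 1 / (T : ℝ)) * (m₂ - m₁ ^ 2) := by
  have hprod := integrable_and_integral_mul_of_pairwise_indepFun hind hX₁ hX₂ hm₁ hm₂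
  simp_rw [sampleVariance_eq_sum_sq_sub_sum_mul hT]
  have hA : Integrable (fun ω => (1 / (T : ℝ)) * ∑ t, X t ω ^ 2) P :=
    (integrable_finsetSum _ fun t _ => hX₂ t).const_mul _
  have hB : Integrable (fun ω => (1 / (T : ℝ)) ^ 2 * ∑ s, ∑ t, X s ω * X t ω) P :=
    (integrable_finsetSum _ fun s _ => integrable_finsetSum _ fun t _ => (hprod s t).1).const_mul _
  refine ⟨hA.sub hB, ?_⟩
  rw [integral_sub hA hB, integral_const_mul, integral_const_mul,
    integral_finsetSum _ fun t _ => hX₂ t,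
    integral_finsetSum _ fun s _ => integrable_finsetSum _ fun t _ => (hprod s t).1]
  simp_rw [integral_finsetSum _ fun t _ => (hprod _ t).1, fun s t => (hprod s t).2, hm₂,
    sum_sum_ite_eq_const, Finset.sum_const, Finset.card_univ, Fintype.card_fin, nsmul_eq_mul]
  field_simp
  ring

end SampleVariance

theorem integral_comp_eval {ι E : Type*} [Fintype ι] [MeasurableSpace E] (μ : Measure E)
    [IsProbabilityMeasure μ] {F : E → ℝ} (hF : AEStronglyMeasurable F μ) (t : ι) :
    ∫ w, F (w t) ∂Measure.pi (fun _ => μ) = ∫ z, F z ∂μ := by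
  have h := measurePreserving_eval (fun _ : ι => μ) t
  rw [← h.map_eq] at hF
  rw [← integral_map h.measurable.aemeasurable hF, h.map_eq]

theorem integrable_and_integral_sampleVar {p T : ℕ} (hT : T ≠ 0) (μ : Measure (Fin p → ℝ))
    [IsProbabilityMeasure μ] {g : (Fin p → ℝ) → ℝ} (hg₁ : Integrable g μ)
    (hg₂ : Integrable (fun z => g z ^ 2) μ) :
    Integrable (sampleVar p T g) (Measure.pi fun _ => μ) ∧
      ∫ w, sampleVar p T g w ∂Measure.pi (fun _ => μ)
        = (1 - 1 / (T : ℝ)) * ((∫ z, g z ^ 2 ∂μ) - (∫ z, g z ∂μ) ^ 2) := by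
  have hpres (t : Fin T) := measurePreserving_eval (fun _ : Fin T => μ) t
  -- `sampleVar p T g w` is `sampleVariance fun t => g (w t)` by unfolding.
  exact (integrable_and_integral_sampleVariance (X := fun t (w : Fin T → Fin p → ℝ) => g (w t)) hT
    (fun s t hst => (iIndepFun_pi fun _ => hg₁.aemeasurable).indepFun hst)
    (fun t => (hpres t).integrable_comp_of_integrable hg₁)
    (fun t => (hpres t).integrable_comp_of_integrable hg₂)
    (fun t => integral_comp_eval μ hg₁.1 t) (fun t => integral_comp_eval μ hg₂.1 t) :)

theorem integral_mul_mem_Icc {α : Type*} [MeasurableSpace α] {μ : Measure α} {f q : α → ℝ}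
    {c C : ℝ} (hf : Integrable f μ) (hf₀ : ∀ᵐ x ∂μ, 0 ≤ f x) (hq : AEStronglyMeasurable q μ)
    (hqb : ∀ᵐ x ∂μ, q x ∈ Set.Icc c C) :
    ∫ x, f x * q x ∂μ ∈ Set.Icc (c * ∫ x, f x ∂μ) (C * ∫ x, f x ∂μ) := by
  have hfq : Integrable (fun x => f x * q x) μ :=
    hf.mul_bdd hq (hqb.mono fun x hx => abs_le_max_abs_abs hx.1 hx.2)
  rw [← integral_const_mul, ← integral_const_mul]
  constructor
  · refine integral_mono_ae (hf.const_mul c) hfq ?_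
    filter_upwards [hf₀, hqb] with x hx hqx
    nlinarith [hqx.1]
  · refine integral_mono_ae hfq (hf.const_mul C) ?_
    filter_upwards [hf₀, hqb] with x hx hqx
    nlinarith [hqx.2]

theorem expected_sampleVar_density_comparison_general (p T : ℕ) (hT : 2 ≤ T)
    (a : ℝ) (ha : 1 < a)
    (q : (Fin T → (Fin p → ℝ)) → ℝ) (hqm : Measurable q)
    (hqb : ∀ w ∈ unitBoxT p T, a⁻¹ ≤ q w ∧ q w ≤ a)
    (g : (Fin p → ℝ) → ℝ)
    (hg1 : Integrable g (volume.restrict (unitBox p)))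
    (hg2 : Integrable (fun z => g z ^ 2) (volume.restrict (unitBox p))) :
    (1 / (2 * a)) * ((∫ z in unitBox p, g z ^ 2) - (∫ z in unitBox p, g z) ^ 2)
        ≤ ∫ w in unitBoxT p T, sampleVar p T g w * q w ∧
      ∫ w in unitBoxT p T, sampleVar p T g w * q w
        ≤ a * ((∫ z in unitBox p, g z ^ 2) - (∫ z in unitBox p, g z) ^ 2) := by
  have : IsProbabilityMeasure (volume.restrict (unitBox p)) :=
    ⟨by rw [Measure.restrict_apply_univ, unitBox, volume_pi_pi]; simp⟩
  have hpi : volume.restrict (unitBoxT p T) = Measure.pi fun _ => volume.restrict (unitBox p) :=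
    Measure.restrict_pi_pi (μ := fun _ => volume) _
  obtain ⟨hVint, hV⟩ := integrable_and_integral_sampleVar (T := T) (by omega) _ hg1 hg2
  rw [← hpi] at hVint hV
  have hV₀ : ∀ w, 0 ≤ sampleVar p T g w := fun w => by unfold sampleVar; positivity
  obtain ⟨hlower, hupper⟩ := integral_mul_mem_Icc hVint (Filter.Eventually.of_forall hV₀)
    hqm.aestronglyMeasurable ((ae_restrict_mem (MeasurableSet.univ_pi fun _ =>
      MeasurableSet.univ_pi fun _ => measurableSet_Icc)).mono hqb)
  set D := (∫ z in unitBox p, g z ^ 2) - (∫ z in unitBox p, g z) ^ 2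
  have hT' : (2 : ℝ) ≤ T := by exact_mod_cast hT
  have hfac : 1 / 2 ≤ 1 - 1 / (T : ℝ) := by
    linarith [one_div_le_one_div_of_le two_pos hT']
  have hD : 0 ≤ D := nonneg_of_mul_nonneg_right (hV ▸ integral_nonneg hV₀) (by linarith)
  rw [hV] at hlower hupper
  have ha₀ : 0 < a := by linarith
  constructor
  · calc 1 / (2 * a) * D = a⁻¹ * (1 / 2 * D) := by ring
      _ ≤ a⁻¹ * ((1 - 1 / (T : ℝ)) * D) := by gcongr
      _ ≤ _ := hlower
  · refine hupper.trans (mul_le_mul_of_nonneg_left ?_ ha₀.le)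
    exact mul_le_of_le_one_left hD (sub_le_self _ (by positivity))

/-- If q is a probability density on ([0,1]^p)^T with a⁻¹ ≤ q ≤ a and T ≥ 2, then
the expected centered sample variance of any square-integrable g lies between
(1/(2a))·‖g‖₂² and a·‖g‖₂², where ‖g‖₂² = ∫g² − (∫g)². -/
theorem expected_sampleVar_density_comparison (p T : ℕ) (hp : 1 ≤ p) (hT : 2 ≤ T)
    (a : ℝ) (ha : 1 < a)
    (q : (Fin T → (Fin p → ℝ)) → ℝ) (hqm : Measurable q)
    (hq1 : ∫ w in unitBoxT p T, q w = 1)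
    (hqb : ∀ w ∈ unitBoxT p T, a⁻¹ ≤ q w ∧ q w ≤ a)
    (g : (Fin p → ℝ) → ℝ) (hgm : Measurable g)
    (hg1 : Integrable g (volume.restrict (unitBox p)))
    (hg2 : Integrable (fun z => g z ^ 2) (volume.restrict (unitBox p))) :
    (1 / (2 * a)) * ((∫ z in unitBox p, g z ^ 2) - (∫ z in unitBox p, g z) ^ 2)
        ≤ ∫ w in unitBoxT p T, sampleVar p T g w * q w ∧
      ∫ w in unitBoxT p T, sampleVar p T g w * q w
        ≤ a * ((∫ z in unitBox p, g z ^ 2) - (∫ z in unitBox p, g z) ^ 2) :=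
  expected_sampleVar_density_comparison_general p T hT a ha q hqm hqb g hg1 hg2
end

section
/- Let p ≥ 1, T ≥ 2, and N ≥ 1 be integers, let a > 1, and let q₁, …, q_N : ([0,1]^p)^T → ℝ be measurable probability densities with a⁻¹ ≤ q_i(w) ≤ a for all w and all i. For square-integrable g : [0,1]^p → ℝ define ‖g‖² = (1/N)·Σ_{i=1}^{N} ∫_{([0,1]^p)^T} V_T(g)(w)·q_i(w) dw. If g₋ and g∼ are square-integrable functions on [0,1]^p with ∫ g₋ = 0, ∫ g∼ = 0, and ∫ g₋·g∼ = 0, then ‖g₋ + g∼‖² ≥ (1/(2a²))·( ‖g₋‖² + ‖g∼‖² ). -/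
/-!
Since the sample mean is linear, `V_T(f + g) = V_T(f) + 2 C_T(f, g) + V_T(g)` with the sample
covariance `C_T`. Lebesgue measure on `([0,1]^p)^T` is the product of `T` uniform probability
measures, and `C_T(f, g)` is a fixed linear combination of the products `f(w_s) g(w_u)`: these
have mean `∫ f g = 0` for `s = u`, and `∫ f · ∫ g = 0` for `s ≠ u` by independence of the
coordinates. So `∫ V_T` is additive on such `f`, `g`. A weight between `a⁻¹` and `a` changes
`∫ V_T` by a factor at most `a`, whence `‖f‖² + ‖g‖² ≤ a ∫ V_T(f + g) ≤ a² ‖f + g‖²`.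
-/

open MeasureTheory

/-- The population norm ‖g‖² = (1/N)·Σ_i ∫ V_T(g)·q_i. -/
noncomputable def popNormSq (p T N : ℕ) (q : Fin N → (Fin T → (Fin p → ℝ)) → ℝ)
    (g : (Fin p → ℝ) → ℝ) : ℝ :=
  (1 / (N : ℝ)) * ∑ i, ∫ w in unitBoxT p T, sampleVar p T g w * q i w

open ProbabilityTheory Finset

lemma volume_unitBox (p : ℕ) : volume (unitBox p) = 1 := by
  simp [unitBox, Real.volume_Icc_pi]

instance (p : ℕ) : IsProbabilityMeasure (volume.restrict (unitBox p)) :=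
  ⟨by rw [Measure.restrict_apply_univ, volume_unitBox]⟩

lemma measurableSet_unitBoxT (p T : ℕ) : MeasurableSet (unitBoxT p T) :=
  .univ_pi fun _ => .univ_pi fun _ => measurableSet_Icc

lemma volume_restrict_unitBoxT (p T : ℕ) :
    volume.restrict (unitBoxT p T) = Measure.pi fun _ : Fin T => volume.restrict (unitBox p) :=
  Measure.restrict_pi_pi (μ := fun _ => volume) fun _ => unitBox p

noncomputable def sampleCov {α : Type*} (T : ℕ) (f g : α → ℝ) (w : Fin T → α) : ℝ :=
  (1 / (T : ℝ)) * ∑ t, (f (w t) - (1 / (T : ℝ)) * ∑ s, f (w s)) *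
    (g (w t) - (1 / (T : ℝ)) * ∑ s, g (w s))

section SampleMoments

variable {α : Type*} {T : ℕ} (f g : α → ℝ) (w : Fin T → α)

lemma sub_sampleMean_eq_sum (t : Fin T) :
    f (w t) - (1 / (T : ℝ)) * ∑ s, f (w s)
      = ∑ s, ((if t = s then 1 else 0) - 1 / (T : ℝ)) * f (w s) := by
  simp only [sub_mul, sum_sub_distrib, ite_mul, one_mul, zero_mul, sum_ite_eq, mem_univ,
    if_true, mul_sum]

lemma sampleCov_eq_sum : sampleCov T f g w
    = ∑ t, ∑ s, ∑ u, (1 / (T : ℝ)) * (((if t = s then 1 else 0) - 1 / (T : ℝ)) *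
        ((if t = u then 1 else 0) - 1 / (T : ℝ))) * (f (w s) * g (w u)) := by
  rw [sampleCov, mul_sum]
  refine sum_congr rfl fun t _ => ?_
  rw [sub_sampleMean_eq_sum, sub_sampleMean_eq_sum, sum_mul_sum, mul_sum]
  refine sum_congr rfl fun s _ => ?_
  rw [mul_sum]
  refine sum_congr rfl fun u _ => ?_
  ring

end SampleMoments

section SampleVar

variable {p T : ℕ} (f g : (Fin p → ℝ) → ℝ) (w : Fin T → Fin p → ℝ)

lemma sampleVar_eq_sampleCov : sampleVar p T g w = sampleCov T g g w := by
  simp only [sampleVar, sampleCov, sq]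

lemma sampleVar_add :
    sampleVar p T (fun z => f z + g z) w
      = sampleVar p T f w + 2 * sampleCov T f g w + sampleVar p T g w := by
  have hsq : ∀ t, (f (w t) + g (w t) - (1 / (T : ℝ)) * ∑ s, (f (w s) + g (w s))) ^ 2
      = (f (w t) - (1 / (T : ℝ)) * ∑ s, f (w s)) ^ 2
        + 2 * ((f (w t) - (1 / (T : ℝ)) * ∑ s, f (w s)) *
          (g (w t) - (1 / (T : ℝ)) * ∑ s, g (w s)))
        + (g (w t) - (1 / (T : ℝ)) * ∑ s, g (w s)) ^ 2 := fun t => by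
    rw [sum_add_distrib]; ring
  simp only [sampleVar, sampleCov]
  rw [sum_congr rfl fun t _ => hsq t, sum_add_distrib, sum_add_distrib, ← mul_sum]
  ring

lemma sampleVar_nonneg : 0 ≤ sampleVar p T g w := by
  unfold sampleVar
  positivity

end SampleVar

section ProductMeasure

variable {ι α : Type*} [Fintype ι] [MeasurableSpace α] {μ : Measure α} [IsProbabilityMeasure μ]
  {f g : α → ℝ}

lemma integrable_comp_eval_mul_comp_eval (hf : MemLp f 2 μ) (hg : MemLp g 2 μ) (s u : ι) :
    Integrable (fun w : ι → α => f (w s) * g (w u)) (Measure.pi fun _ => μ) :=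
  (hf.comp_measurePreserving (measurePreserving_eval _ s)).integrable_mul
    (hg.comp_measurePreserving (measurePreserving_eval _ u))

lemma integral_comp_eval_mul_comp_eval_eq_zero (hf : Measurable f) (hg : Measurable g)
    (hf0 : ∫ x, f x ∂μ = 0) (hfg : ∫ x, f x * g x ∂μ = 0) (s u : ι) :
    ∫ w : ι → α, f (w s) * g (w u) ∂(Measure.pi fun _ => μ) = 0 := by
  rcases eq_or_ne s u with rfl | hsu
  · exact (integral_comp_eval (μ := fun _ => μ) (i := s) (f := fun x => f x * g x)
      (hf.mul hg).aestronglyMeasurable).trans hfg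
  · have hind : IndepFun (fun w : ι → α => w s) (fun w => w u) (Measure.pi fun _ => μ) :=
      (iIndepFun_pi (X := fun _ => id) fun _ => aemeasurable_id).indepFun hsu
    calc ∫ w : ι → α, f (w s) * g (w u) ∂(Measure.pi fun _ => μ)
        = (∫ w : ι → α, f (w s) ∂(Measure.pi fun _ => μ))
            * ∫ w : ι → α, g (w u) ∂(Measure.pi fun _ => μ) :=
          (hind.comp hf hg).integral_fun_mul_eq_mul_integral
            (hf.comp (measurable_pi_apply s)).aestronglyMeasurable
            (hg.comp (measurable_pi_apply u)).aestronglyMeasurable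
      _ = 0 := by rw [integral_comp_eval hf.aestronglyMeasurable, hf0, zero_mul]

end ProductMeasure

section SampleMomentIntegrals

variable {α : Type*} [MeasurableSpace α] {μ : Measure α} [IsProbabilityMeasure μ] {T : ℕ}
  {f g : α → ℝ}

lemma integrable_sampleCov (hf : MemLp f 2 μ) (hg : MemLp g 2 μ) :
    Integrable (sampleCov T f g) (Measure.pi fun _ => μ) := by
  simp_rw [funext (sampleCov_eq_sum f g)]
  exact integrable_finsetSum _ fun t _ => integrable_finsetSum _ fun s _ =>
    integrable_finsetSum _ fun u _ =>
      (integrable_comp_eval_mul_comp_eval hf hg s u).const_mul _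

lemma integral_sampleCov_eq_zero (hf : Measurable f) (hg : Measurable g)
    (hf2 : MemLp f 2 μ) (hg2 : MemLp g 2 μ)
    (hf0 : ∫ x, f x ∂μ = 0) (hfg : ∫ x, f x * g x ∂μ = 0) :
    ∫ w, sampleCov T f g w ∂(Measure.pi fun _ => μ) = 0 := by
  have hint := integrable_comp_eval_mul_comp_eval (ι := Fin T) hf2 hg2
  simp_rw [sampleCov_eq_sum f g]
  rw [integral_finsetSum _ fun t _ => integrable_finsetSum _ fun s _ =>
    integrable_finsetSum _ fun u _ => (hint s u).const_mul _]
  refine sum_eq_zero fun t _ => ?_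
  rw [integral_finsetSum _ fun s _ => integrable_finsetSum _ fun u _ => (hint s u).const_mul _]
  refine sum_eq_zero fun s _ => ?_
  rw [integral_finsetSum _ fun u _ => (hint s u).const_mul _]
  refine sum_eq_zero fun u _ => ?_
  rw [integral_const_mul, integral_comp_eval_mul_comp_eval_eq_zero hf hg hf0 hfg, mul_zero]

end SampleMomentIntegrals

section SampleVarIntegrals

variable {p T : ℕ} {μ : Measure (Fin p → ℝ)} [IsProbabilityMeasure μ] {f g : (Fin p → ℝ) → ℝ}

lemma integrable_sampleVar (hg : MemLp g 2 μ) :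
    Integrable (sampleVar p T g) (Measure.pi fun _ => μ) := by
  simp_rw [funext (sampleVar_eq_sampleCov g)]
  exact integrable_sampleCov hg hg

lemma integral_sampleVar_add (hf : Measurable f) (hg : Measurable g)
    (hf2 : MemLp f 2 μ) (hg2 : MemLp g 2 μ)
    (hf0 : ∫ x, f x ∂μ = 0) (hfg : ∫ x, f x * g x ∂μ = 0) :
    ∫ w, sampleVar p T (fun z => f z + g z) w ∂(Measure.pi fun _ => μ)
      = ∫ w, sampleVar p T f w ∂(Measure.pi fun _ => μ)
        + ∫ w, sampleVar p T g w ∂(Measure.pi fun _ => μ) := by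
  have hcov : Integrable (fun w => 2 * sampleCov T f g w) (Measure.pi fun _ => μ) :=
    (integrable_sampleCov hf2 hg2).const_mul 2
  have hfcov : Integrable (fun w => sampleVar p T f w + 2 * sampleCov T f g w)
      (Measure.pi fun _ => μ) := (integrable_sampleVar hf2).add hcov
  simp_rw [sampleVar_add f g]
  rw [integral_add hfcov (integrable_sampleVar hg2), integral_add (integrable_sampleVar hf2) hcov,
    integral_const_mul, integral_sampleCov_eq_zero hf hg hf2 hg2 hf0 hfg, mul_zero, add_zero]

end SampleVarIntegrals

section Weights

variable {β : Type*} [MeasurableSpace β] {μ : Measure β} {F q : β → ℝ} {a : ℝ}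

lemma integral_mul_le_mul_integral (hFq : Integrable (fun x => F x * q x) μ)
    (hF : Integrable F μ) (hF0 : ∀ x, 0 ≤ F x) (hq : ∀ᵐ x ∂μ, q x ≤ a) :
    ∫ x, F x * q x ∂μ ≤ a * ∫ x, F x ∂μ := by
  rw [← integral_const_mul]
  refine integral_mono_ae hFq (hF.const_mul a) ?_
  filter_upwards [hq] with x hx
  rw [mul_comm a]
  exact mul_le_mul_of_nonneg_left hx (hF0 x)

lemma mul_integral_le_integral_mul (hFq : Integrable (fun x => F x * q x) μ)
    (hF : Integrable F μ) (hF0 : ∀ x, 0 ≤ F x) (hq : ∀ᵐ x ∂μ, a ≤ q x) :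
    a * ∫ x, F x ∂μ ≤ ∫ x, F x * q x ∂μ := by
  rw [← integral_const_mul]
  refine integral_mono_ae (hF.const_mul a) hFq ?_
  filter_upwards [hq] with x hx
  rw [mul_comm a]
  exact mul_le_mul_of_nonneg_left hx (hF0 x)

lemma MeasureTheory.Integrable.mul_of_ae_mem_Icc {b : ℝ} (hF : Integrable F μ)
    (hq : AEStronglyMeasurable q μ)
    (hqb : ∀ᵐ x ∂μ, b ≤ q x ∧ q x ≤ a) :
    Integrable (fun x => F x * q x) μ :=
  hF.mul_bdd hq <| by
    filter_upwards [hqb] with x hx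
    exact abs_le_max_abs_abs hx.1 hx.2

end Weights

section Population

variable {p T : ℕ} {a : ℝ} {f g : (Fin p → ℝ) → ℝ}

lemma integral_sampleVar_mul_add_integral_sampleVar_mul_le {μ : Measure (Fin p → ℝ)}
    [IsProbabilityMeasure μ] {q : (Fin T → Fin p → ℝ) → ℝ} (ha : 0 < a)
    (hq : AEStronglyMeasurable q (Measure.pi fun _ => μ))
    (hqb : ∀ᵐ w ∂(Measure.pi fun _ => μ), a⁻¹ ≤ q w ∧ q w ≤ a)
    (hf : Measurable f) (hg : Measurable g) (hf2 : MemLp f 2 μ) (hg2 : MemLp g 2 μ)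
    (hf0 : ∫ x, f x ∂μ = 0) (hfg : ∫ x, f x * g x ∂μ = 0) :
    ∫ w, sampleVar p T f w * q w ∂(Measure.pi fun _ => μ)
        + ∫ w, sampleVar p T g w * q w ∂(Measure.pi fun _ => μ)
      ≤ a ^ 2 * ∫ w, sampleVar p T (fun z => f z + g z) w * q w ∂(Measure.pi fun _ => μ) := by
  have hfg2 : MemLp (fun z => f z + g z) 2 μ := hf2.add hg2
  have hweighted {h : (Fin p → ℝ) → ℝ} (h2 : MemLp h 2 μ) :
      Integrable (fun w => sampleVar p T h w * q w) (Measure.pi fun _ => μ) :=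
    (integrable_sampleVar h2).mul_of_ae_mem_Icc hq hqb
  have hupper {h : (Fin p → ℝ) → ℝ} (h2 : MemLp h 2 μ) :=
    integral_mul_le_mul_integral (hweighted h2) (integrable_sampleVar h2) (sampleVar_nonneg h)
      (hqb.mono fun _ hw => hw.2)
  have hlower := mul_integral_le_integral_mul (hweighted hfg2) (integrable_sampleVar hfg2)
    (sampleVar_nonneg _) (hqb.mono fun _ hw => hw.1)
  calc _ ≤ a * ∫ w, sampleVar p T f w ∂(Measure.pi fun _ => μ)
        + a * ∫ w, sampleVar p T g w ∂(Measure.pi fun _ => μ) :=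
        add_le_add (hupper hf2) (hupper hg2)
    _ = a * (a * (a⁻¹ *
          ∫ w, sampleVar p T (fun z => f z + g z) w ∂(Measure.pi fun _ => μ))) := by
        rw [integral_sampleVar_add hf hg hf2 hg2 hf0 hfg]
        field_simp
    _ ≤ _ := by
        rw [sq, mul_assoc]
        exact mul_le_mul_of_nonneg_left (mul_le_mul_of_nonneg_left hlower ha.le) ha.le

variable {N : ℕ} {q : Fin N → (Fin T → Fin p → ℝ) → ℝ}

lemma popNormSq_nonneg (hq : ∀ i, ∀ w ∈ unitBoxT p T, 0 ≤ q i w) (g : (Fin p → ℝ) → ℝ) :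
    0 ≤ popNormSq p T N q g :=
  mul_nonneg (by positivity) <| sum_nonneg fun i _ =>
    setIntegral_nonneg (measurableSet_unitBoxT p T) fun w hw =>
      mul_nonneg (sampleVar_nonneg g w) (hq i w hw)

lemma popNormSq_add_popNormSq_le (ha : 0 < a) (hqm : ∀ i, Measurable (q i))
    (hqb : ∀ i, ∀ w ∈ unitBoxT p T, a⁻¹ ≤ q i w ∧ q i w ≤ a)
    (hf : Measurable f) (hg : Measurable g)
    (hf2 : MemLp f 2 (volume.restrict (unitBox p))) (hg2 : MemLp g 2 (volume.restrict (unitBox p)))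
    (hf0 : ∫ z in unitBox p, f z = 0) (hfg : ∫ z in unitBox p, f z * g z = 0) :
    popNormSq p T N q f + popNormSq p T N q g ≤ a ^ 2 * popNormSq p T N q (fun z => f z + g z) := by
  simp only [popNormSq]
  rw [← mul_add, ← sum_add_distrib, mul_left_comm, mul_sum univ _ (a ^ 2)]
  gcongr with i
  have hqb_ae := ae_restrict_of_forall_mem (μ := volume) (measurableSet_unitBoxT p T) (hqb i)
  rw [volume_restrict_unitBoxT] at hqb_ae ⊢
  exact integral_sampleVar_mul_add_integral_sampleVar_mul_le ha (hqm i).aestronglyMeasurable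
    hqb_ae hf hg hf2 hg2 hf0 hfg

end Population

theorem popNormSq_orth_lower_bound_general (p T N : ℕ)
    (a : ℝ) (ha : 1 < a)
    (q : Fin N → (Fin T → (Fin p → ℝ)) → ℝ) (hqm : ∀ i, Measurable (q i))
    (hqb : ∀ i, ∀ w ∈ unitBoxT p T, a⁻¹ ≤ q i w ∧ q i w ≤ a)
    (gm gn : (Fin p → ℝ) → ℝ) (hgmm : Measurable gm) (hgnm : Measurable gn)
    (hgm2 : Integrable (fun z => gm z ^ 2) (volume.restrict (unitBox p)))
    (hgn2 : Integrable (fun z => gn z ^ 2) (volume.restrict (unitBox p)))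
    (hgm0 : ∫ z in unitBox p, gm z = 0)
    (horth : ∫ z in unitBox p, gm z * gn z = 0) :
    (1 / (2 * a ^ 2)) * (popNormSq p T N q gm + popNormSq p T N q gn)
      ≤ popNormSq p T N q (fun z => gm z + gn z) := by
  have ha0 : 0 < a := one_pos.trans ha
  have hsum := popNormSq_add_popNormSq_le ha0 hqm hqb hgmm hgnm
    ((memLp_two_iff_integrable_sq hgmm.aestronglyMeasurable).2 hgm2)
    ((memLp_two_iff_integrable_sq hgnm.aestronglyMeasurable).2 hgn2) hgm0 horth
  have hnonneg := popNormSq_nonneg (fun i w hw => (inv_pos.2 ha0).le.trans (hqb i w hw).1)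
    (fun z => gm z + gn z)
  calc (1 / (2 * a ^ 2)) * (popNormSq p T N q gm + popNormSq p T N q gn)
      ≤ (1 / (2 * a ^ 2)) * (a ^ 2 * popNormSq p T N q (fun z => gm z + gn z)) := by gcongr
    _ = popNormSq p T N q (fun z => gm z + gn z) / 2 := by field_simp
    _ ≤ popNormSq p T N q (fun z => gm z + gn z) := by linarith

/-- If the panel densities q_i satisfy a⁻¹ ≤ q_i ≤ a and g₋, g∼ are square-integrable,
mean-zero, and L²-orthogonal on [0,1]^p, then
‖g₋ + g∼‖² ≥ (1/(2a²))·(‖g₋‖² + ‖g∼‖²). -/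
theorem popNormSq_orth_lower_bound (p T N : ℕ) (hp : 1 ≤ p) (hT : 2 ≤ T) (hN : 1 ≤ N)
    (a : ℝ) (ha : 1 < a)
    (q : Fin N → (Fin T → (Fin p → ℝ)) → ℝ) (hqm : ∀ i, Measurable (q i))
    (hq1 : ∀ i, ∫ w in unitBoxT p T, q i w = 1)
    (hqb : ∀ i, ∀ w ∈ unitBoxT p T, a⁻¹ ≤ q i w ∧ q i w ≤ a)
    (gm gn : (Fin p → ℝ) → ℝ) (hgmm : Measurable gm) (hgnm : Measurable gn)
    (hgm1 : Integrable gm (volume.restrict (unitBox p)))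
    (hgm2 : Integrable (fun z => gm z ^ 2) (volume.restrict (unitBox p)))
    (hgn1 : Integrable gn (volume.restrict (unitBox p)))
    (hgn2 : Integrable (fun z => gn z ^ 2) (volume.restrict (unitBox p)))
    (hgm0 : ∫ z in unitBox p, gm z = 0)
    (hgn0 : ∫ z in unitBox p, gn z = 0)
    (horth : ∫ z in unitBox p, gm z * gn z = 0) :
    (1 / (2 * a ^ 2)) * (popNormSq p T N q gm + popNormSq p T N q gn)
      ≤ popNormSq p T N q (fun z => gm z + gn z) :=
  popNormSq_orth_lower_bound_general p T N a ha q hqm hqb gm gn hgmm hgnm hgm2 hgn2 hgm0 horth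
end

section
/- Let n ≥ 1 and d ≥ 1 be integers. Let M be an n×n real symmetric idempotent matrix (Mᵀ = M and M² = M), let Ψ be an n×d real matrix such that ΨᵀMΨ is positive definite, let C be an n×n real symmetric positive semidefinite matrix with cᵀCc ≤ a·cᵀc for all c ∈ ℝⁿ (where a > 0), and let b > 0 satisfy vᵀΨᵀΨv ≤ b·vᵀΨᵀMΨv for all v ∈ ℝ^d. Then Tr( Ψ(ΨᵀMΨ)⁻¹ΨᵀM C MΨ(ΨᵀMΨ)⁻¹Ψᵀ ) ≤ a·b·d. -/
/-!
Write `S = ΨᵀMΨ` and `B = MΨS⁻¹`. The matrix in question is `(ΨBᵀ) C (ΨBᵀ)ᵀ`, and because `M` is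
a symmetric idempotent, `BᵀB = S⁻¹`. A trace `tr (R X Rᵀ)` is the sum of the quadratic forms of `X`
at the rows of `R`, so the bound on `C` gives `tr ≤ a · tr (B ΨᵀΨ Bᵀ)`, the bound on `ΨᵀΨ` then
gives `≤ a · b · tr (B S Bᵀ)`, and `tr (B S Bᵀ) = tr (BᵀB S) = tr 1 = d`.
-/

open Matrix

namespace Matrix

variable {m n α : Type*} [Fintype m] [Fintype n]

theorem trace_mul_mul_transpose [CommSemiring α] (R : Matrix m n α) (X : Matrix n n α) :
    (R * X * Rᵀ).trace = ∑ i, R i ⬝ᵥ X *ᵥ R i := by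
  simp only [trace, diag, mul_apply, transpose_apply, dotProduct, mulVec, Finset.sum_mul]
  refine Finset.sum_congr rfl fun i _ => Finset.sum_comm.trans ?_
  simp only [Finset.mul_sum, mul_comm, mul_left_comm]

theorem trace_mul_mul_transpose_le_mul [CommSemiring α] [PartialOrder α] [IsOrderedRing α]
    {X Y : Matrix n n α} {c : α} (h : ∀ v, v ⬝ᵥ X *ᵥ v ≤ c * (v ⬝ᵥ Y *ᵥ v))
    (R : Matrix m n α) : (R * X * Rᵀ).trace ≤ c * (R * Y * Rᵀ).trace := by
  rw [trace_mul_mul_transpose, trace_mul_mul_transpose, Finset.mul_sum]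
  exact Finset.sum_le_sum fun i _ => h (R i)

variable [DecidableEq m] [CommRing α]

theorem transpose_mul_self_eq_inv_of_isIdempotentElem {M : Matrix n n α} (hMs : M.IsSymm)
    (hMi : IsIdempotentElem M) (Ψ : Matrix n m α) (hS : IsUnit (Ψᵀ * M * Ψ).det) :
    (M * Ψ * (Ψᵀ * M * Ψ)⁻¹)ᵀ * (M * Ψ * (Ψᵀ * M * Ψ)⁻¹) = (Ψᵀ * M * Ψ)⁻¹ := by
  calc (M * Ψ * (Ψᵀ * M * Ψ)⁻¹)ᵀ * (M * Ψ * (Ψᵀ * M * Ψ)⁻¹)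
      = (Ψᵀ * M * Ψ)⁻¹ * (Ψᵀ * (M * M) * Ψ) * (Ψᵀ * M * Ψ)⁻¹ := by
        simp only [transpose_mul, transpose_nonsing_inv, transpose_transpose, hMs.eq,
          Matrix.mul_assoc]
    _ = (Ψᵀ * M * Ψ)⁻¹ := by rw [hMi.eq, nonsing_inv_mul _ hS, Matrix.one_mul]

end Matrix

theorem trace_projection_bound_general (n d : ℕ)
    (M : Matrix (Fin n) (Fin n) ℝ) (hMs : M.IsSymm) (hMi : M * M = M)
    (Ψ : Matrix (Fin n) (Fin d) ℝ) (hpd : (Ψᵀ * M * Ψ).PosDef)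
    (C : Matrix (Fin n) (Fin n) ℝ)
    (a : ℝ) (ha : 0 < a) (hC : ∀ c : Fin n → ℝ, c ⬝ᵥ C.mulVec c ≤ a * (c ⬝ᵥ c))
    (b : ℝ)
    (hΨ : ∀ v : Fin d → ℝ,
      v ⬝ᵥ (Ψᵀ * Ψ).mulVec v ≤ b * (v ⬝ᵥ (Ψᵀ * M * Ψ).mulVec v)) :
    (Ψ * (Ψᵀ * M * Ψ)⁻¹ * Ψᵀ * M * C * M * Ψ * (Ψᵀ * M * Ψ)⁻¹ * Ψᵀ).trace
      ≤ a * b * d := by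
  set S := Ψᵀ * M * Ψ
  have hS : IsUnit S.det := isUnit_iff_ne_zero.mpr hpd.det_pos.ne'
  set B := M * Ψ * S⁻¹
  have hBt : Bᵀ = S⁻¹ * Ψᵀ * M := by
    simp only [B, S, transpose_mul, transpose_nonsing_inv, transpose_transpose, hMs.eq,
      Matrix.mul_assoc]
  calc (Ψ * S⁻¹ * Ψᵀ * M * C * M * Ψ * S⁻¹ * Ψᵀ).trace
      = ((Ψ * Bᵀ) * C * (Ψ * Bᵀ)ᵀ).trace := by
        rw [transpose_mul Ψ Bᵀ, transpose_transpose, hBt]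
        simp only [B, Matrix.mul_assoc]
    _ ≤ a * ((Ψ * Bᵀ) * 1 * (Ψ * Bᵀ)ᵀ).trace :=
        trace_mul_mul_transpose_le_mul (by simpa using hC) _
    _ = a * (B * (Ψᵀ * Ψ) * Bᵀ).trace := by
        rw [Matrix.mul_one, transpose_mul Ψ Bᵀ, transpose_transpose, trace_mul_comm]
        simp only [Matrix.mul_assoc]
    _ ≤ a * (b * (B * S * Bᵀ).trace) := by
        gcongr
        exact trace_mul_mul_transpose_le_mul hΨ B
    _ = a * b * d := by
        rw [trace_mul_comm, ← Matrix.mul_assoc,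
          transpose_mul_self_eq_inv_of_isIdempotentElem hMs hMi Ψ hS, nonsing_inv_mul _ hS,
          trace_one, Fintype.card_fin, mul_assoc]

/-- Trace bound for the within-transformed projection: if M is symmetric idempotent,
ΨᵀMΨ is positive definite, C is symmetric PSD with quadratic form bounded by a, and
vᵀΨᵀΨv ≤ b·vᵀΨᵀMΨv for all v, then
Tr(Ψ(ΨᵀMΨ)⁻¹ΨᵀM C MΨ(ΨᵀMΨ)⁻¹Ψᵀ) ≤ a·b·d. -/
theorem trace_projection_bound (n d : ℕ) (hn : 1 ≤ n) (hd : 1 ≤ d)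
    (M : Matrix (Fin n) (Fin n) ℝ) (hMs : M.IsSymm) (hMi : M * M = M)
    (Ψ : Matrix (Fin n) (Fin d) ℝ) (hpd : (Ψᵀ * M * Ψ).PosDef)
    (C : Matrix (Fin n) (Fin n) ℝ) (hCs : C.IsSymm) (hCpsd : C.PosSemidef)
    (a : ℝ) (ha : 0 < a) (hC : ∀ c : Fin n → ℝ, c ⬝ᵥ C.mulVec c ≤ a * (c ⬝ᵥ c))
    (b : ℝ) (hb : 0 < b)
    (hΨ : ∀ v : Fin d → ℝ,
      v ⬝ᵥ (Ψᵀ * Ψ).mulVec v ≤ b * (v ⬝ᵥ (Ψᵀ * M * Ψ).mulVec v)) :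
    (Ψ * (Ψᵀ * M * Ψ)⁻¹ * Ψᵀ * M * C * M * Ψ * (Ψᵀ * M * Ψ)⁻¹ * Ψᵀ).trace
      ≤ a * b * d :=
  trace_projection_bound_general n d M hMs hMi Ψ hpd C a ha hC b hΨ
end

section
/- Let (Ω, F, P) be a probability space, let p ≥ 1, T ≥ 1, N ≥ 1 be integers, and let W₁, …, W_N be mutually independent random vectors, each W_i = (Z_{i1}, …, Z_{iT}) taking values in ([0,1]^p)^T. For bounded measurable f, g : [0,1]^p → ℝ define ζ_i(f,g) = (1/T)·Σ_{t=1}^T ( f(Z_{it}) − (1/T)Σ_{s=1}^T f(Z_{is}) )·( g(Z_{it}) − (1/T)Σ_{s=1}^T g(Z_{is}) ), set ⟨f,g⟩_{NT} = (1/N)·Σ_{i=1}^N ζ_i(f,g), ⟨f,g⟩ = E[⟨f,g⟩_{NT}], and ‖g‖² = ⟨g,g⟩. Let Θ be a d-dimensional linear subspace of bounded measurable functions on [0,1]^p on which ⟨·,·⟩ is an inner product (‖g‖ > 0 for every nonzero g ∈ Θ), let v : [0,1]^p → ℝ be bounded measurable with sup-norm ‖v‖_∞, and assume the random variable sup_{g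 ∈ Θ, g ≠ 0} |⟨v,g⟩_{NT} − ⟨v,g⟩|²/‖g‖² is measurable. Then E[ sup_{g ∈ Θ, g ≠ 0} |⟨v,g⟩_{NT} − ⟨v,g⟩|² / ‖g‖² ] ≤ 4·‖v‖_∞²·d / N. -/
/-!
For fixed `ω`, `g ↦ ⟨v, g⟩_{NT} - ⟨v, g⟩` is a linear form on `Θ`, so the supremum of its
square divided by `‖g‖²` is at most `∑ⱼ (⟨v, eⱼ⟩_{NT} - ⟨v, eⱼ⟩)²` for a `⟨·,·⟩`-orthonormal basis
`e₁, …, e_d` of `Θ` (Cauchy–Schwarz for the dual norm). The expectation of the `j`-th summand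
is the variance of an average of `N` independent terms `ζᵢ(v, eⱼ)`, hence at most
`N⁻² ∑ᵢ E[ζᵢ(v, eⱼ)²] ≤ N⁻² ∑ᵢ ‖v‖∞² E[ζᵢ(eⱼ, eⱼ)] = ‖v‖∞² / N`, by Cauchy–Schwarz for `ζᵢ` and
`ζᵢ(v, v) ≤ ‖v‖∞²` (a sample variance is at most the mean square). Summing over `j` gives
`‖v‖∞² d / N`.
-/

open MeasureTheory

/-- ζ(Z)(f,g) : the centered sample covariance of f and g along the panel
observations Z 0, …, Z (T−1). -/
noncomputable def zetaCov (p T : ℕ) (Z : Fin T → (Fin p → ℝ))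
    (f g : (Fin p → ℝ) → ℝ) : ℝ :=
  (1 / (T : ℝ)) * ∑ t, (f (Z t) - (1 / (T : ℝ)) * ∑ s, f (Z s))
      * (g (Z t) - (1 / (T : ℝ)) * ∑ s, g (Z s))

open ProbabilityTheory Finset Module

lemma sum_sq_sub_mean_le {T : ℕ} (a : Fin T → ℝ) :
    ∑ t, (a t - (1 / (T : ℝ)) * ∑ s, a s) ^ 2 ≤ ∑ t, a t ^ 2 := by
  rcases Nat.eq_zero_or_pos T with rfl | hT
  · simp
  have hT' : (T : ℝ) ≠ 0 := by positivity
  have h : ∑ t, (a t - (1 / (T : ℝ)) * ∑ s, a s) ^ 2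
      = ∑ t, a t ^ 2 - (∑ s, a s) ^ 2 / T := by
    simp only [sub_sq, sum_add_distrib, sum_sub_distrib, ← sum_mul, ← mul_sum, sum_const,
      card_univ, Fintype.card_fin, nsmul_eq_mul]
    field_simp
    ring
  rw [h, sub_le_self_iff]
  positivity

section ZetaCov

variable {p T : ℕ} (Z : Fin T → (Fin p → ℝ))

noncomputable def zetaCovCenter : ((Fin p → ℝ) → ℝ) →ₗ[ℝ] Fin T → ℝ where
  toFun f t := f (Z t) - (1 / (T : ℝ)) * ∑ s, f (Z s)
  map_add' f f' := by ext t; simp only [Pi.add_apply, sum_add_distrib]; ring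
  map_smul' c f := by
    ext t; simp only [Pi.smul_apply, smul_eq_mul, ← mul_sum, RingHom.id_apply]; ring

lemma zetaCov_eq_sum_center (f g : (Fin p → ℝ) → ℝ) :
    zetaCov p T Z f g = (1 / (T : ℝ)) * ∑ t, zetaCovCenter Z f t * zetaCovCenter Z g t :=
  rfl

noncomputable def zetaCovForm : LinearMap.BilinForm ℝ ((Fin p → ℝ) → ℝ) :=
  LinearMap.mk₂ ℝ (zetaCov p T Z)
    (fun f f' g => by
      simp only [zetaCov_eq_sum_center, map_add, Pi.add_apply, add_mul, sum_add_distrib, mul_add])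
    (fun c f g => by
      simp only [zetaCov_eq_sum_center, map_smul, Pi.smul_apply, smul_eq_mul, mul_assoc,
        ← mul_sum]
      ring)
    (fun f g g' => by
      simp only [zetaCov_eq_sum_center, map_add, Pi.add_apply, mul_add, sum_add_distrib])
    (fun c f g => by
      simp only [zetaCov_eq_sum_center, map_smul, Pi.smul_apply, smul_eq_mul,
        mul_left_comm _ c, ← mul_sum])

@[simp] lemma zetaCovForm_apply (f g : (Fin p → ℝ) → ℝ) : zetaCovForm Z f g = zetaCov p T Z f g :=
  rfl

lemma zetaCov_comm (f g : (Fin p → ℝ) → ℝ) : zetaCov p T Z f g = zetaCov p T Z g f := by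
  simp only [zetaCov_eq_sum_center, mul_comm (zetaCovCenter Z f _)]

lemma zetaCov_self_nonneg (f : (Fin p → ℝ) → ℝ) : 0 ≤ zetaCov p T Z f f := by
  rw [zetaCov_eq_sum_center]
  exact mul_nonneg (by positivity) (sum_nonneg fun t _ => mul_self_nonneg _)

lemma sq_zetaCov_le_mul (f g : (Fin p → ℝ) → ℝ) :
    zetaCov p T Z f g ^ 2 ≤ zetaCov p T Z f f * zetaCov p T Z g g :=
  (zetaCovForm Z).apply_sq_le_of_symm (zetaCov_self_nonneg Z) ⟨zetaCov_comm Z⟩ f g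

lemma zetaCov_self_le_sq {f : (Fin p → ℝ) → ℝ} {C : ℝ} (hf : ∀ z, |f z| ≤ C) :
    zetaCov p T Z f f ≤ C ^ 2 := by
  have hsq : ∀ t, f (Z t) ^ 2 ≤ C ^ 2 := fun t => by
    rw [← sq_abs]
    exact pow_le_pow_left₀ (abs_nonneg _) (hf _) 2
  calc zetaCov p T Z f f
      = (1 / (T : ℝ)) * ∑ t, (f (Z t) - (1 / (T : ℝ)) * ∑ s, f (Z s)) ^ 2 := by
        simp only [zetaCov, sq]
    _ ≤ (1 / (T : ℝ)) * ∑ _t : Fin T, C ^ 2 := by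
        refine mul_le_mul_of_nonneg_left ?_ (by positivity)
        exact (sum_sq_sub_mean_le _).trans (sum_le_sum fun t _ => hsq t)
    _ = (T / T : ℝ) * C ^ 2 := by
        simp only [sum_const, card_univ, Fintype.card_fin, nsmul_eq_mul]
        ring
    _ ≤ C ^ 2 := mul_le_of_le_one_left (sq_nonneg C) (div_self_le_one _)

lemma sq_zetaCov_le_sq_mul {f g : (Fin p → ℝ) → ℝ} {C : ℝ} (hf : ∀ z, |f z| ≤ C) :
    zetaCov p T Z f g ^ 2 ≤ C ^ 2 * zetaCov p T Z g g :=
  (sq_zetaCov_le_mul Z f g).trans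
    (mul_le_mul_of_nonneg_right (zetaCov_self_le_sq Z hf) (zetaCov_self_nonneg Z g))

lemma abs_zetaCov_le {f g : (Fin p → ℝ) → ℝ} {Cf Cg : ℝ} (hf : ∀ z, |f z| ≤ Cf)
    (hg : ∀ z, |g z| ≤ Cg) : |zetaCov p T Z f g| ≤ |Cf * Cg| := by
  rw [← sq_le_sq, mul_pow]
  exact (sq_zetaCov_le_sq_mul Z hf).trans
    (mul_le_mul_of_nonneg_left (zetaCov_self_le_sq Z hg) (sq_nonneg _))

end ZetaCov

lemma measurable_zetaCov {p T : ℕ} {f g : (Fin p → ℝ) → ℝ} (hf : Measurable f)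
    (hg : Measurable g) : Measurable (fun Z : Fin T → (Fin p → ℝ) => zetaCov p T Z f g) := by
  unfold zetaCov
  fun_prop

lemma OrthonormalBasis.sq_apply_le_sum_sq_mul_norm_sq {ι E : Type*} [Fintype ι]
    [NormedAddCommGroup E] [InnerProductSpace ℝ E] (b : OrthonormalBasis ι ℝ E)
    (L : StrongDual ℝ E) (x : E) : L x ^ 2 ≤ (∑ i, L (b i) ^ 2) * ‖x‖ ^ 2 := by
  rw [← b.norm_dual L, ← mul_pow, ← sq_abs]
  gcongr
  exact L.le_opNorm x

namespace LinearMap.BilinForm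

variable {V : Type*} [AddCommGroup V] [Module ℝ V]

lemma apply_self_nonneg_of_pos {Q : LinearMap.BilinForm ℝ V} (hpos : ∀ x ≠ 0, 0 < Q x x)
    (x : V) : 0 ≤ Q x x := by
  rcases eq_or_ne x 0 with rfl | hx
  · simp
  · exact (hpos x hx).le

lemma exists_forall_sq_div_le_sum_sq [FiniteDimensional ℝ V] (Q : LinearMap.BilinForm ℝ V)
    (hsymm : Q.IsSymm) (hpos : ∀ x ≠ 0, 0 < Q x x) :
    ∃ b : Fin (finrank ℝ V) → V, (∀ j, Q (b j) (b j) = 1) ∧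
      ∀ (φ : V →ₗ[ℝ] ℝ) (x : V), φ x ^ 2 / Q x x ≤ ∑ j, φ (b j) ^ 2 := by
  let core : InnerProductSpace.Core ℝ V :=
    { inner := fun x y => Q x y
      conj_inner_symm := fun x y => hsymm.eq y x
      re_inner_nonneg := apply_self_nonneg_of_pos hpos
      add_left := fun x y z => by simp
      smul_left := fun x y r => by simp
      definite := fun x hx => by_contra fun h => (hpos x h).ne' hx }
  let := core.toNormedAddCommGroup
  let := InnerProductSpace.ofCore core.toCore
  let b := stdOrthonormalBasis ℝ V
  have hnorm : ∀ x, ‖x‖ ^ 2 = Q x x := fun x => (real_inner_self_eq_norm_sq x).symm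
  refine ⟨b, fun j => by rw [← hnorm, b.orthonormal.1 j, one_pow], fun φ x => ?_⟩
  refine div_le_of_le_mul₀ (apply_self_nonneg_of_pos hpos x) (by positivity) ?_
  rw [← hnorm]
  exact b.sq_apply_le_sum_sq_mul_norm_sq (LinearMap.toContinuousLinearMap φ) x

end LinearMap.BilinForm

section RandomForms

variable {Ω V : Type*} [MeasurableSpace Ω] (μ : Measure Ω) [AddCommGroup V] [Module ℝ V]

noncomputable def integralLinearForm (L : Ω → V →ₗ[ℝ] ℝ)
    (hL : ∀ x, Integrable (fun ω => L ω x) μ) : V →ₗ[ℝ] ℝ where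
  toFun x := ∫ ω, L ω x ∂μ
  map_add' x y := by simp only [map_add]; exact integral_add (hL x) (hL y)
  map_smul' c x := by
    simp only [map_smul, smul_eq_mul, RingHom.id_apply]; exact integral_const_mul c _

noncomputable def integralBilinForm (B : Ω → LinearMap.BilinForm ℝ V)
    (hB : ∀ x y, Integrable (fun ω => B ω x y) μ) : LinearMap.BilinForm ℝ V :=
  LinearMap.mk₂ ℝ (fun x y => ∫ ω, B ω x y ∂μ)
    (fun x x' y => by
      simp only [map_add, LinearMap.add_apply]; exact integral_add (hB x y) (hB x' y))
    (fun c x y => by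
      simp only [map_smul, LinearMap.smul_apply, smul_eq_mul]; exact integral_const_mul c _)
    (fun x y y' => by simp only [map_add]; exact integral_add (hB x y) (hB x y'))
    (fun c x y => by simp only [map_smul, smul_eq_mul]; exact integral_const_mul c _)

variable {μ}

lemma isSymm_integralBilinForm {B : Ω → LinearMap.BilinForm ℝ V}
    (hB : ∀ x y, Integrable (fun ω => B ω x y) μ) (hsymm : ∀ ω, (B ω).IsSymm) :
    (integralBilinForm μ B hB).IsSymm :=
  ⟨fun x y => integral_congr_ae (ae_of_all _ fun ω => (hsymm ω).eq x y)⟩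

theorem integral_iSup_sq_div_le [IsFiniteMeasure μ] [FiniteDimensional ℝ V]
    (L : Ω → V →ₗ[ℝ] ℝ) (hL : ∀ x, MemLp (fun ω => L ω x) 2 μ)
    (Q : LinearMap.BilinForm ℝ V) (hsymm : Q.IsSymm) (hpos : ∀ x ≠ 0, 0 < Q x x) {c : ℝ}
    (hvar : ∀ x, Var[fun ω => L ω x; μ] ≤ c * Q x x) :
    ∫ ω, (⨆ x : {x : V // x ≠ 0}, (L ω x.1 - ∫ ω', L ω' x.1 ∂μ) ^ 2 / Q x.1 x.1) ∂μ
      ≤ c * finrank ℝ V := by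
  obtain ⟨b, hb, hsup⟩ := Q.exists_forall_sq_div_le_sum_sq hsymm hpos
  let φ : Ω → V →ₗ[ℝ] ℝ := fun ω =>
    L ω - integralLinearForm μ L fun x => (hL x).integrable one_le_two
  have hφ : ∀ x, Integrable (fun ω => φ ω x ^ 2) μ := fun x =>
    ((hL x).sub (memLp_const _)).integrable_sq
  calc ∫ ω, (⨆ x : {x : V // x ≠ 0}, (L ω x.1 - ∫ ω', L ω' x.1 ∂μ) ^ 2 / Q x.1 x.1) ∂μ
      ≤ ∫ ω, ∑ j, φ ω (b j) ^ 2 ∂μ := by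
        refine integral_mono_of_nonneg (ae_of_all _ fun ω => ?_)
          (integrable_finsetSum _ fun j _ => hφ (b j))
          (ae_of_all _ fun ω => Real.iSup_le (fun x => hsup (φ ω) x) (by positivity))
        exact Real.iSup_nonneg fun x =>
          div_nonneg (sq_nonneg _) (Q.apply_self_nonneg_of_pos hpos _)
    _ = ∑ j, Var[fun ω => L ω (b j); μ] := by
        rw [integral_finsetSum _ fun j _ => hφ (b j)]
        refine sum_congr rfl fun j _ => (variance_eq_integral ?_).symm
        exact (hL (b j)).aestronglyMeasurable.aemeasurable
    _ ≤ ∑ _j : Fin (finrank ℝ V), c := sum_le_sum fun j _ => by simpa [hb j] using hvar (b j)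
    _ = c * finrank ℝ V := by simp [mul_comm]

end RandomForms

section EmpiricalInner

variable {Ω : Type*} [MeasurableSpace Ω] {μ : Measure Ω} {p T N : ℕ}

noncomputable def empiricalInnerForm (w : Fin N → Fin T → Fin p → ℝ) :
    LinearMap.BilinForm ℝ ((Fin p → ℝ) → ℝ) :=
  (1 / (N : ℝ)) • ∑ i, zetaCovForm (w i)

@[simp] lemma empiricalInnerForm_apply (w : Fin N → Fin T → Fin p → ℝ)
    (f g : (Fin p → ℝ) → ℝ) :
    empiricalInnerForm w f g = (1 / (N : ℝ)) * ∑ i, zetaCov p T (w i) f g := by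
  simp [empiricalInnerForm]

lemma isSymm_empiricalInnerForm (w : Fin N → Fin T → Fin p → ℝ) :
    (empiricalInnerForm w).IsSymm :=
  ⟨fun f g => by simp only [empiricalInnerForm_apply, zetaCov_comm _ f]⟩

lemma memLp_zetaCov [IsFiniteMeasure μ] {Z : Ω → Fin T → Fin p → ℝ} (hZ : Measurable Z)
    {f g : (Fin p → ℝ) → ℝ} (hf : Measurable f) (hg : Measurable g)
    (hfC : ∃ C, ∀ z, |f z| ≤ C) (hgC : ∃ C, ∀ z, |g z| ≤ C) (q : ENNReal) :
    MemLp (fun ω => zetaCov p T (Z ω) f g) q μ := by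
  obtain ⟨Cf, hCf⟩ := hfC
  obtain ⟨Cg, hCg⟩ := hgC
  refine MemLp.of_bound ((measurable_zetaCov hf hg).comp hZ).aestronglyMeasurable |Cf * Cg|
    (ae_of_all _ fun ω => ?_)
  exact (Real.norm_eq_abs _).trans_le (abs_zetaCov_le _ hCf hCg)

lemma memLp_empiricalInnerForm [IsFiniteMeasure μ] {W : Fin N → Ω → Fin T → Fin p → ℝ}
    (hW : ∀ i, Measurable (W i)) {f g : (Fin p → ℝ) → ℝ} (hf : Measurable f)
    (hg : Measurable g) (hfC : ∃ C, ∀ z, |f z| ≤ C) (hgC : ∃ C, ∀ z, |g z| ≤ C) (q : ENNReal) :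
    MemLp (fun ω => empiricalInnerForm (fun i => W i ω) f g) q μ := by
  simp only [empiricalInnerForm_apply]
  exact (memLp_finsetSum _ fun i _ => memLp_zetaCov (hW i) hf hg hfC hgC q).const_mul _

lemma variance_empiricalInnerForm_le [IsProbabilityMeasure μ]
    {W : Fin N → Ω → Fin T → Fin p → ℝ} (hW : ∀ i, Measurable (W i)) (hindep : iIndepFun W μ)
    {v e : (Fin p → ℝ) → ℝ} (hv : Measurable v) (he : Measurable e) {Cv : ℝ}
    (hCv : ∀ z, |v z| ≤ Cv) (heC : ∃ C, ∀ z, |e z| ≤ C) :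
    Var[fun ω => empiricalInnerForm (fun i => W i ω) v e; μ]
      ≤ Cv ^ 2 / N * ∫ ω, empiricalInnerForm (fun i => W i ω) e e ∂μ := by
  let X : Fin N → Ω → ℝ := fun i ω => zetaCov p T (W i ω) v e
  have hX : ∀ i, MemLp (X i) 2 μ := fun i => memLp_zetaCov (hW i) hv he ⟨Cv, hCv⟩ heC 2
  have hXindep : Set.Pairwise ↑(univ : Finset (Fin N)) fun i j => X i ⟂ᵢ[μ] X j :=
    fun i _ j _ hij =>
      (hindep.indepFun hij).comp (measurable_zetaCov hv he) (measurable_zetaCov hv he)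
  have hee : ∀ i, Integrable (fun ω => zetaCov p T (W i ω) e e) μ := fun i =>
    memLp_one_iff_integrable.mp (memLp_zetaCov (hW i) he he heC heC 1)
  simp only [empiricalInnerForm_apply]
  calc Var[fun ω => (1 / (N : ℝ)) * ∑ i, X i ω; μ]
      = (1 / (N : ℝ)) ^ 2 * ∑ i, Var[X i; μ] := by
        rw [variance_const_mul, ← IndepFun.variance_sum (fun i _ => hX i) hXindep, sum_fn]
    _ ≤ (1 / (N : ℝ)) ^ 2 * ∑ i, ∫ ω, Cv ^ 2 * zetaCov p T (W i ω) e e ∂μ := by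
        refine mul_le_mul_of_nonneg_left (sum_le_sum fun i _ => ?_) (sq_nonneg _)
        refine (variance_le_expectation_sq (hX i).aestronglyMeasurable).trans ?_
        exact integral_mono (hX i).integrable_sq ((hee i).const_mul _)
          fun ω => sq_zetaCov_le_sq_mul _ hCv
    _ = Cv ^ 2 / N * ∫ ω, (1 / (N : ℝ)) * ∑ i, zetaCov p T (W i ω) e e ∂μ := by
        simp only [integral_const_mul, integral_finsetSum _ fun i _ => hee i, ← mul_sum]
        ring

end EmpiricalInner

theorem expected_sup_empirical_inner_deviation_general
    {Ω : Type*} [MeasurableSpace Ω] (μ : Measure Ω) [IsProbabilityMeasure μ]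
    (p T N d : ℕ) (hd : 1 ≤ d)
    (W : Fin N → Ω → (Fin T → (Fin p → ℝ)))
    (hWm : ∀ i, Measurable (W i))
    (hWindep : ProbabilityTheory.iIndepFun W μ)
    (Θ : Submodule ℝ ((Fin p → ℝ) → ℝ))
    (hΘmeas : ∀ g ∈ Θ, Measurable g)
    (hΘbdd : ∀ g ∈ Θ, ∃ C : ℝ, ∀ z, |g z| ≤ C)
    (hΘdim : Module.finrank ℝ Θ = d)
    (hinner : ∀ g ∈ Θ, g ≠ 0 →
      0 < ∫ ω, (1 / (N : ℝ)) * ∑ i, zetaCov p T (W i ω) g g ∂μ)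
    (v : (Fin p → ℝ) → ℝ) (hvm : Measurable v) (Cv : ℝ) (hCv : ∀ z, |v z| ≤ Cv) :
    ∫ ω, (⨆ g : {g : Θ // g ≠ 0},
        |((1 / (N : ℝ)) * ∑ i, zetaCov p T (W i ω) v (g.1 : (Fin p → ℝ) → ℝ))
            - ∫ ω', (1 / (N : ℝ)) * ∑ i,
                zetaCov p T (W i ω') v (g.1 : (Fin p → ℝ) → ℝ) ∂μ| ^ 2
          / ∫ ω', (1 / (N : ℝ)) * ∑ i,
              zetaCov p T (W i ω') (g.1 : (Fin p → ℝ) → ℝ)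
                (g.1 : (Fin p → ℝ) → ℝ) ∂μ) ∂μ
      ≤ 4 * Cv ^ 2 * d / N := by
  have : FiniteDimensional ℝ Θ := .of_finrank_pos (by omega)
  let E : Ω → LinearMap.BilinForm ℝ Θ := fun ω => (empiricalInnerForm fun i => W i ω).restrict Θ
  have hE : ∀ x y : Θ, Integrable (fun ω => E ω x y) μ := fun x y =>
    (memLp_empiricalInnerForm hWm (hΘmeas _ x.2) (hΘmeas _ y.2) (hΘbdd _ x.2) (hΘbdd _ y.2)
      1).integrable le_rfl
  let Q := integralBilinForm μ E hE
  let L : Ω → Θ →ₗ[ℝ] ℝ := fun ω => empiricalInnerForm (fun i => W i ω) v ∘ₗ Θ.subtype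
  have hpos : ∀ x : Θ, x ≠ 0 → 0 < Q x x := fun x hx => by
    simpa [Q, E, integralBilinForm] using hinner x x.2 (by simpa using hx)
  calc _ = ∫ ω, (⨆ x : {x : Θ // x ≠ 0}, (L ω x.1 - ∫ ω', L ω' x.1 ∂μ) ^ 2 / Q x.1 x.1) ∂μ := by
        simp [L, Q, E, integralBilinForm, sq_abs]
    _ ≤ Cv ^ 2 / N * finrank ℝ Θ :=
        integral_iSup_sq_div_le L
          (fun x => memLp_empiricalInnerForm hWm hvm (hΘmeas _ x.2) ⟨Cv, hCv⟩ (hΘbdd _ x.2) 2)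
          Q (isSymm_integralBilinForm hE fun ω => (isSymm_empiricalInnerForm _).restrict Θ) hpos
          fun x => variance_empiricalInnerForm_le hWm hWindep hvm (hΘmeas _ x.2) hCv (hΘbdd _ x.2)
    _ ≤ 4 * Cv ^ 2 * d / N := by
        rw [hΘdim, div_mul_eq_mul_div]
        gcongr
        nlinarith [sq_nonneg Cv, (Nat.cast_nonneg d : (0 : ℝ) ≤ d)]

/-- If W₁,…,W_N are independent panel observations, Θ is a d-dimensional subspace of
bounded measurable functions on which the population inner product
⟨f,g⟩ = E[(1/N)Σ_i ζ_i(f,g)] is an inner product, and v is bounded measurable with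
|v| ≤ Cv, then E[ sup_{g ∈ Θ, g ≠ 0} |⟨v,g⟩_{NT} − ⟨v,g⟩|²/‖g‖² ] ≤ 4·Cv²·d/N. -/
theorem expected_sup_empirical_inner_deviation
    {Ω : Type*} [MeasurableSpace Ω] (μ : Measure Ω) [IsProbabilityMeasure μ]
    (p T N d : ℕ) (hp : 1 ≤ p) (hT : 1 ≤ T) (hN : 1 ≤ N) (hd : 1 ≤ d)
    (W : Fin N → Ω → (Fin T → (Fin p → ℝ)))
    (hWm : ∀ i, Measurable (W i))
    (hWindep : ProbabilityTheory.iIndepFun W μ)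
    (Θ : Submodule ℝ ((Fin p → ℝ) → ℝ))
    (hΘmeas : ∀ g ∈ Θ, Measurable g)
    (hΘbdd : ∀ g ∈ Θ, ∃ C : ℝ, ∀ z, |g z| ≤ C)
    (hΘdim : Module.finrank ℝ Θ = d)
    (hinner : ∀ g ∈ Θ, g ≠ 0 →
      0 < ∫ ω, (1 / (N : ℝ)) * ∑ i, zetaCov p T (W i ω) g g ∂μ)
    (v : (Fin p → ℝ) → ℝ) (hvm : Measurable v) (Cv : ℝ) (hCv : ∀ z, |v z| ≤ Cv)
    (hsupmeas : Measurable (fun ω =>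
      ⨆ g : {g : Θ // g ≠ 0},
        |((1 / (N : ℝ)) * ∑ i, zetaCov p T (W i ω) v (g.1 : (Fin p → ℝ) → ℝ))
            - ∫ ω', (1 / (N : ℝ)) * ∑ i,
                zetaCov p T (W i ω') v (g.1 : (Fin p → ℝ) → ℝ) ∂μ| ^ 2
          / ∫ ω', (1 / (N : ℝ)) * ∑ i,
              zetaCov p T (W i ω') (g.1 : (Fin p → ℝ) → ℝ)
                (g.1 : (Fin p → ℝ) → ℝ) ∂μ)) :
    ∫ ω, (⨆ g : {g : Θ // g ≠ 0},
        |((1 / (N : ℝ)) * ∑ i, zetaCov p T (W i ω) v (g.1 : (Fin p → ℝ) → ℝ))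
            - ∫ ω', (1 / (N : ℝ)) * ∑ i,
                zetaCov p T (W i ω') v (g.1 : (Fin p → ℝ) → ℝ) ∂μ| ^ 2
          / ∫ ω', (1 / (N : ℝ)) * ∑ i,
              zetaCov p T (W i ω') (g.1 : (Fin p → ℝ) → ℝ)
                (g.1 : (Fin p → ℝ) → ℝ) ∂μ) ∂μ
      ≤ 4 * Cv ^ 2 * d / N :=
  expected_sup_empirical_inner_deviation_general μ p T N d hd W hWm hWindep Θ hΘmeas hΘbdd hΘdim
    hinner v hvm Cv hCv
end
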